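/- For an integer j ≥ 1, define I(j) = (1/√(2π)) ∫ from √(j·ln((j+1)/j)) to √((j+1)·ln((j+1)/j)) of e^{−t²/2} dt. Then the sequence j ↦ (j+1)·I(j) is decreasing for j ≥ 2; that is, for all integers j ≥ 2, (j+2)·I(j+1) ≤ (j+1)·I(j). Consequently, for every integer j ≥ 2, (j+1)·I(j) ≤ 3·I(2) = (3/√(2π)) ∫ from √(2·ln(3/2)) to √(3·ln(3/2)) of e^{−t²/2} dt. -/
import Mathlib


open MeasureTheory Real

set_option maxHeartbeats 2000000
set_option maxRecDepth 16000

private lemma dlo_rat (n : ℝ) (hn : 2 ≤ n) :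
    -5/(8*(n+1)^2)
      ≤ (n+2)*(2*(1/(2*n+3)) + 2*(1/(2*n+3))^3/3 - 3*(1/(2*n+3))^5)
        - (n+1)*(2*(1/(2*n+1)) + 2*(1/(2*n+1))^3/3 + 3*(1/(2*n+1))^5) := by
  obtain ⟨m, hm, rfl⟩ : ∃ m : ℝ, 0 ≤ m ∧ n = m + 2 := ⟨n - 2, by linarith, by ring⟩
  have h1 : (0:ℝ) < 2*(m+2)+1 := by linarith
  have h2 : (0:ℝ) < 2*(m+2)+3 := by linarith
  have h3 : (0:ℝ) < m+2+1 := by linarith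
  have hN : (0:ℝ) ≤ 5469717 + 109473672*m + 289413668*m^2 + 358687600*m^3 + 262841216*m^4 + 124397952*m^5 + 39304448*m^6 + 8276736*m^7 + 1118976*m^8 + 88064*m^9 + 3072*m^10 := by
    have h0 : (0:ℝ) ≤ m := hm
    linarith [pow_nonneg hm 2, pow_nonneg hm 3, pow_nonneg hm 4, pow_nonneg hm 5, pow_nonneg hm 6, pow_nonneg hm 7, pow_nonneg hm 8, pow_nonneg hm 9, pow_nonneg hm 10]
  have hD : (0:ℝ) < 24*(2*(m+2)+1)^5*(2*(m+2)+3)^5*(m+2+1)^2 := by positivity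
  have hid : ((m+2)+2)*(2*(1/(2*(m+2)+3)) + 2*(1/(2*(m+2)+3))^3/3 - 3*(1/(2*(m+2)+3))^5)
        - ((m+2)+1)*(2*(1/(2*(m+2)+1)) + 2*(1/(2*(m+2)+1))^3/3 + 3*(1/(2*(m+2)+1))^5)
        - (-5/(8*((m+2)+1)^2))
      = (5469717 + 109473672*m + 289413668*m^2 + 358687600*m^3 + 262841216*m^4 + 124397952*m^5 + 39304448*m^6 + 8276736*m^7 + 1118976*m^8 + 88064*m^9 + 3072*m^10) / (24*(2*(m+2)+1)^5*(2*(m+2)+3)^5*(m+2+1)^2) := by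
    field_simp
    ring
  have hfrac : (0:ℝ) ≤ (5469717 + 109473672*m + 289413668*m^2 + 358687600*m^3 + 262841216*m^4 + 124397952*m^5 + 39304448*m^6 + 8276736*m^7 + 1118976*m^8 + 88064*m^9 + 3072*m^10) / (24*(2*(m+2)+1)^5*(2*(m+2)+3)^5*(m+2+1)^2) :=
    div_nonneg hN hD.le
  linarith [hid, hfrac]

private lemma master_rat (n : ℝ) (hn : 2 ≤ n) :
    (n+2)^2*(2*(1/(2*n+3)) + 2*(1/(2*n+3))^3/3 + 3*(1/(2*n+3))^5)*(2*n+1+2*(n+1/2-1/(8*n)+1/(16*n^2)))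
      ≤ (n+1)^2*(2*(1/(2*n+1)) + 2*(1/(2*n+1))^3/3 - 3*(1/(2*n+1))^5)*(2*n+3+2*(n+3/2-1/(8*(n+1))))
        *(1+(-5/(8*(n+1)^2))/2)^2 := by
  obtain ⟨m, hm, rfl⟩ : ∃ m : ℝ, 0 ≤ m ∧ n = m + 2 := ⟨n - 2, by linarith, by ring⟩
  have h1 : (0:ℝ) < 2*(m+2)+1 := by linarith
  have h2 : (0:ℝ) < 2*(m+2)+3 := by linarith
  have h3 : (0:ℝ) < m+2+1 := by linarith
  have h4 : (0:ℝ) < m+2 := by linarith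
  have hN : (0:ℝ) ≤ 246150906176124 + 1508841843466380*m + 4334990582091067*m^2 + 7754947704314936*m^3 + 9676699840406635*m^4 + 8939716860468298*m^5 + 6332771819315440*m^6 + 3514079621209984*m^7 + 1546630603221648*m^8 + 543057371447264*m^9 + 152137107004800*m^10 + 33815902074112*m^11 + 5890986814976*m^12 + 787515814912*m^13 + 78020722688*m^14 + 5398282240*m^15 + 232914944*m^16 + 4718592*m^17 := by
    have h0 : (0:ℝ) ≤ m := hm
    linarith [pow_nonneg hm 2, pow_nonneg hm 3, pow_nonneg hm 4, pow_nonneg hm 5, pow_nonneg hm 6, pow_nonneg hm 7, pow_nonneg hm 8, pow_nonneg hm 9, pow_nonneg hm 10, pow_nonneg hm 11, pow_nonneg hm 12, pow_nonneg hm 13, pow_nonneg hm 14, pow_nonneg hm 15, pow_nonneg hm 16, pow_nonneg hm 17]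
  have hD : (0:ℝ) < 3072*(m+2)^2*(m+2+1)^5*(2*(m+2)+1)^5*(2*(m+2)+3)^5 := by positivity
  have hid : ((m+2)+1)^2*(2*(1/(2*(m+2)+1)) + 2*(1/(2*(m+2)+1))^3/3 - 3*(1/(2*(m+2)+1))^5)
          *(2*(m+2)+3+2*((m+2)+3/2-1/(8*((m+2)+1))))*(1+(-5/(8*((m+2)+1)^2))/2)^2
        - ((m+2)+2)^2*(2*(1/(2*(m+2)+3)) + 2*(1/(2*(m+2)+3))^3/3 + 3*(1/(2*(m+2)+3))^5)
          *(2*(m+2)+1+2*((m+2)+1/2-1/(8*(m+2))+1/(16*(m+2)^2)))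
      = (246150906176124 + 1508841843466380*m + 4334990582091067*m^2 + 7754947704314936*m^3 + 9676699840406635*m^4 + 8939716860468298*m^5 + 6332771819315440*m^6 + 3514079621209984*m^7 + 1546630603221648*m^8 + 543057371447264*m^9 + 152137107004800*m^10 + 33815902074112*m^11 + 5890986814976*m^12 + 787515814912*m^13 + 78020722688*m^14 + 5398282240*m^15 + 232914944*m^16 + 4718592*m^17) / (3072*(m+2)^2*(m+2+1)^5*(2*(m+2)+1)^5*(2*(m+2)+3)^5) := by
    field_simp
    ring
  have hfrac : (0:ℝ) ≤ (246150906176124 + 1508841843466380*m + 4334990582091067*m^2 + 7754947704314936*m^3 + 9676699840406635*m^4 + 8939716860468298*m^5 + 6332771819315440*m^6 + 3514079621209984*m^7 + 1546630603221648*m^8 + 543057371447264*m^9 + 152137107004800*m^10 + 33815902074112*m^11 + 5890986814976*m^12 + 787515814912*m^13 + 78020722688*m^14 + 5398282240*m^15 + 232914944*m^16 + 4718592*m^17) / (3072*(m+2)^2*(m+2+1)^5*(2*(m+2)+1)^5*(2*(m+2)+3)^5) :=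
    div_nonneg hN hD.le
  linarith [hid, hfrac]

private lemma log_ratio_bound {u : ℝ} (h0 : 0 < u) (h5 : u ≤ 1/5) :
    |Real.log ((1+u)/(1-u)) - (2*u + 2*u^3/3)| ≤ 3*u^5 := by
  have hu1 : |u| < 1 := by rw [abs_of_pos h0]; linarith
  have hu2 : |(-u)| < 1 := by rwa [abs_neg]
  have hA := Real.abs_log_sub_add_sum_range_le hu2 4
  have hB := Real.abs_log_sub_add_sum_range_le hu1 4
  simp only [Finset.sum_range_succ, Finset.sum_range_zero, abs_neg, abs_of_pos h0,
    sub_neg_eq_add] at hA hB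
  norm_num at hA hB
  have hlog : Real.log ((1+u)/(1-u)) = Real.log (1+u) - Real.log (1-u) :=
    Real.log_div (by linarith) (by linarith)
  have hden : u^5/(1-u) ≤ (5/4)*u^5 := by
    rw [div_le_iff₀ (by linarith)]
    nlinarith [pow_pos h0 5]
  rw [abs_le] at hA hB ⊢
  constructor <;> nlinarith [hA.1, hA.2, hB.1, hB.2, hden, hlog]

private lemma log_bound (n : ℝ) (hn : 2 ≤ n) :
    |Real.log ((n+1)/n) - (2*(1/(2*n+1)) + 2*(1/(2*n+1))^3/3)| ≤ 3*(1/(2*n+1))^5 := by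
  have hp : (0:ℝ) < 2*n+1 := by linarith
  have h0 : 0 < 1/(2*n+1) := by positivity
  have h5 : 1/(2*n+1) ≤ 1/5 := by rw [div_le_div_iff₀ hp (by norm_num)]; linarith
  have hu : 1/(2*n+1) < 1 := by rw [div_lt_one hp]; linarith
  have heq : (1+1/(2*n+1))/(1-1/(2*n+1)) = (n+1)/n := by
    rw [div_eq_div_iff (by linarith : (0:ℝ) < 1-1/(2*n+1)).ne' (by linarith : (0:ℝ) < n).ne']
    field_simp
    ring
  have := log_ratio_bound h0 h5
  rwa [heq] at this

private lemma sqrt_mul_upper (n : ℝ) (hn : 2 ≤ n) :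
    Real.sqrt (n*(n+1)) ≤ n + 1/2 - 1/(8*n) + 1/(16*n^2) := by
  have hn0 : (0:ℝ) < n := by linarith
  have hB : (0:ℝ) ≤ n + 1/2 - 1/(8*n) + 1/(16*n^2) := by
    have h1 : 1/(8*n) ≤ 1/16 := by rw [div_le_div_iff₀ (by linarith) (by norm_num)]; linarith
    have h2 : (0:ℝ) ≤ 1/(16*n^2) := by positivity
    linarith
  have h : n*(n+1) ≤ (n + 1/2 - 1/(8*n) + 1/(16*n^2))^2 := by
    have e : (n + 1/2 - 1/(8*n) + 1/(16*n^2))^2 - n*(n+1) = (20*n^2 - 4*n + 1)/(256*n^4) := by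
      field_simp
      ring
    have e2 : (0:ℝ) ≤ (20*n^2 - 4*n + 1)/(256*n^4) :=
      div_nonneg (by nlinarith) (by positivity)
    linarith
  calc Real.sqrt (n*(n+1)) ≤ Real.sqrt ((n + 1/2 - 1/(8*n) + 1/(16*n^2))^2) := Real.sqrt_le_sqrt h
    _ = n + 1/2 - 1/(8*n) + 1/(16*n^2) := Real.sqrt_sq hB

private lemma sqrt_mul_lower (n : ℝ) (hn : 2 ≤ n) :
    n + 3/2 - 1/(8*(n+1)) ≤ Real.sqrt ((n+1)*(n+2)) := by
  have h1 : (0:ℝ) < n+1 := by linarith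
  have hB : (0:ℝ) ≤ n + 3/2 - 1/(8*(n+1)) := by
    have : 1/(8*(n+1)) ≤ 1 := by rw [div_le_one (by linarith)]; linarith
    linarith
  have h : (n + 3/2 - 1/(8*(n+1)))^2 ≤ (n+1)*(n+2) := by
    have e : (n+1)*(n+2) - (n + 3/2 - 1/(8*(n+1)))^2 = (8*n+7)/(64*(n+1)^2) := by
      field_simp
      ring
    have e2 : (0:ℝ) ≤ (8*n+7)/(64*(n+1)^2) := div_nonneg (by linarith) (by positivity)
    linarith
  calc n + 3/2 - 1/(8*(n+1)) = Real.sqrt ((n + 3/2 - 1/(8*(n+1)))^2) := (Real.sqrt_sq hB).symm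
    _ ≤ Real.sqrt ((n+1)*(n+2)) := Real.sqrt_le_sqrt h
private lemma key_ineq (n : ℝ) (hn : 2 ≤ n) :
    0 ≤ 1 + ((n+2)*Real.log ((n+2)/(n+1)) - (n+1)*Real.log ((n+1)/n))/2 ∧
    (n+2)*(Real.sqrt (Real.log ((n+2)/(n+1))) * (Real.sqrt (n+1) + Real.sqrt n))
      ≤ (n+1)*(Real.sqrt (Real.log ((n+1)/n)) * (Real.sqrt (n+2) + Real.sqrt (n+1)))
        *(1 + ((n+2)*Real.log ((n+2)/(n+1)) - (n+1)*Real.log ((n+1)/n))/2) := by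
  have hn0 : (0:ℝ) < n := by linarith
  have hn1 : (0:ℝ) < n+1 := by linarith
  have hn2 : (0:ℝ) < n+2 := by linarith
  have h2n1 : (0:ℝ) < 2*n+1 := by linarith
  have h2n3 : (0:ℝ) < 2*n+3 := by linarith
  have hu1p : (0:ℝ) < 1/(2*n+1) := by positivity
  have hu2p : (0:ℝ) < 1/(2*n+3) := by positivity
  have hLpos : 0 < Real.log ((n+1)/n) := Real.log_pos (by rw [lt_div_iff₀ hn0]; linarith)
  have hL'pos : 0 < Real.log ((n+2)/(n+1)) := Real.log_pos (by rw [lt_div_iff₀ hn1]; linarith)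
  have hb1 := log_bound n hn
  have hb2 := log_bound (n+1) (by linarith)
  rw [show (2*(n+1)+1 : ℝ) = 2*n+3 from by ring, show (n+1+1 : ℝ) = n+2 from by ring] at hb2
  rw [abs_le] at hb1 hb2
  have hL1 : 2*(1/(2*n+1)) + 2*(1/(2*n+1))^3/3 - 3*(1/(2*n+1))^5 ≤ Real.log ((n+1)/n) := by
    linarith [hb1.1]
  have hL2 : Real.log ((n+1)/n) ≤ 2*(1/(2*n+1)) + 2*(1/(2*n+1))^3/3 + 3*(1/(2*n+1))^5 := by
    linarith [hb1.2]
  have hM1 : 2*(1/(2*n+3)) + 2*(1/(2*n+3))^3/3 - 3*(1/(2*n+3))^5 ≤ Real.log ((n+2)/(n+1)) := by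
    linarith [hb2.1]
  have hM2 : Real.log ((n+2)/(n+1)) ≤ 2*(1/(2*n+3)) + 2*(1/(2*n+3))^3/3 + 3*(1/(2*n+3))^5 := by
    linarith [hb2.2]
  have hPpos : (0:ℝ) < 2*(1/(2*n+1)) + 2*(1/(2*n+1))^3/3 - 3*(1/(2*n+1))^5 := by
    have ha : (1/(2*n+1)) ≤ 1/5 := by
      rw [div_le_div_iff₀ h2n1 (by norm_num)]; linarith
    have hsq : (1/(2*n+1))^2 ≤ 1/25 := by nlinarith
    have hb : (1/(2*n+1))^5 ≤ (1/(2*n+1))^3 * (1/25) := by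
      calc (1/(2*n+1))^5 = (1/(2*n+1))^3 * (1/(2*n+1))^2 := by ring
        _ ≤ (1/(2*n+1))^3 * (1/25) := by
            apply mul_le_mul_of_nonneg_left hsq (by positivity)
    nlinarith [pow_pos hu1p 3, hu1p]
  -- lower bound on D
  have hDlo : -5/(8*(n+1)^2) ≤ (n+2)*Real.log ((n+2)/(n+1)) - (n+1)*Real.log ((n+1)/n) := by
    have t1 : (n+2)*(2*(1/(2*n+3)) + 2*(1/(2*n+3))^3/3 - 3*(1/(2*n+3))^5)
        ≤ (n+2)*Real.log ((n+2)/(n+1)) := mul_le_mul_of_nonneg_left hM1 (by linarith)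
    have t2 : (n+1)*Real.log ((n+1)/n)
        ≤ (n+1)*(2*(1/(2*n+1)) + 2*(1/(2*n+1))^3/3 + 3*(1/(2*n+1))^5) :=
      mul_le_mul_of_nonneg_left hL2 (by linarith)
    linarith [dlo_rat n hn]
  have hdhalf : (0:ℝ) < 1 + (-5/(8*(n+1)^2))/2 := by
    have h9 : (9:ℝ) ≤ (n+1)^2 := by nlinarith
    have : 5/(8*(n+1)^2) ≤ 5/72 := by
      rw [div_le_div_iff₀ (by positivity) (by norm_num)]; nlinarith
    have h0 : -5/(8*(n+1)^2) = -(5/(8*(n+1)^2)) := by ring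
    rw [h0]; linarith
  have hDhalf : 0 ≤ 1 + ((n+2)*Real.log ((n+2)/(n+1)) - (n+1)*Real.log ((n+1)/n))/2 := by
    linarith
  refine ⟨hDhalf, ?_⟩
  -- sqrt facts
  have hp0 : 0 ≤ Real.sqrt n := Real.sqrt_nonneg n
  have hq0 : 0 ≤ Real.sqrt (n+1) := Real.sqrt_nonneg _
  have hr0 : 0 ≤ Real.sqrt (n+2) := Real.sqrt_nonneg _
  have hX0 : 0 ≤ Real.sqrt (Real.log ((n+1)/n)) := Real.sqrt_nonneg _
  have hY0 : 0 ≤ Real.sqrt (Real.log ((n+2)/(n+1))) := Real.sqrt_nonneg _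
  have hp2 : Real.sqrt n ^ 2 = n := Real.sq_sqrt hn0.le
  have hq2 : Real.sqrt (n+1) ^ 2 = n+1 := Real.sq_sqrt hn1.le
  have hr2 : Real.sqrt (n+2) ^ 2 = n+2 := Real.sq_sqrt hn2.le
  have hX2 : Real.sqrt (Real.log ((n+1)/n)) ^ 2 = Real.log ((n+1)/n) := Real.sq_sqrt hLpos.le
  have hY2 : Real.sqrt (Real.log ((n+2)/(n+1))) ^ 2 = Real.log ((n+2)/(n+1)) :=
    Real.sq_sqrt hL'pos.le
  have hs1 : Real.sqrt n * Real.sqrt (n+1) = Real.sqrt (n*(n+1)) :=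
    (Real.sqrt_mul hn0.le _).symm
  have hs2 : Real.sqrt (n+1) * Real.sqrt (n+2) = Real.sqrt ((n+1)*(n+2)) :=
    (Real.sqrt_mul hn1.le _).symm
  have hsu : Real.sqrt n * Real.sqrt (n+1) ≤ n + 1/2 - 1/(8*n) + 1/(16*n^2) := by
    rw [hs1]; exact sqrt_mul_upper n hn
  have hsl : n + 3/2 - 1/(8*(n+1)) ≤ Real.sqrt (n+1) * Real.sqrt (n+2) := by
    rw [hs2]; exact sqrt_mul_lower n hn
  -- squared inequality
  have hsq : ((n+2)*(Real.sqrt (Real.log ((n+2)/(n+1))) * (Real.sqrt (n+1) + Real.sqrt n)))^2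
      ≤ ((n+1)*(Real.sqrt (Real.log ((n+1)/n)) * (Real.sqrt (n+2) + Real.sqrt (n+1)))
        *(1 + ((n+2)*Real.log ((n+2)/(n+1)) - (n+1)*Real.log ((n+1)/n))/2))^2 := by
    have eL : ((n+2)*(Real.sqrt (Real.log ((n+2)/(n+1))) * (Real.sqrt (n+1) + Real.sqrt n)))^2
        = (n+2)^2 * Real.sqrt (Real.log ((n+2)/(n+1))) ^2
          * (Real.sqrt (n+1)^2 + Real.sqrt n ^2 + 2*(Real.sqrt n * Real.sqrt (n+1))) := by
      ring
    have eR : ((n+1)*(Real.sqrt (Real.log ((n+1)/n)) * (Real.sqrt (n+2) + Real.sqrt (n+1)))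
          *(1 + ((n+2)*Real.log ((n+2)/(n+1)) - (n+1)*Real.log ((n+1)/n))/2))^2
        = (n+1)^2 * Real.sqrt (Real.log ((n+1)/n)) ^2
          * (Real.sqrt (n+2)^2 + Real.sqrt (n+1)^2 + 2*(Real.sqrt (n+1) * Real.sqrt (n+2)))
          * (1 + ((n+2)*Real.log ((n+2)/(n+1)) - (n+1)*Real.log ((n+1)/n))/2)^2 := by
      ring
    rw [eL, eR, hp2, hq2, hr2, hX2, hY2]
    have hq1nn : (0:ℝ) ≤ n+1 + n + 2*(Real.sqrt n * Real.sqrt (n+1)) := by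
      have := mul_nonneg hp0 hq0; linarith
    have step1 : (n+2)^2 * Real.log ((n+2)/(n+1)) * (n+1 + n + 2*(Real.sqrt n * Real.sqrt (n+1)))
        ≤ (n+2)^2*(2*(1/(2*n+3)) + 2*(1/(2*n+3))^3/3 + 3*(1/(2*n+3))^5)
          *(2*n+1+2*(n+1/2-1/(8*n)+1/(16*n^2))) := by
      apply mul_le_mul
      · exact mul_le_mul_of_nonneg_left hM2 (by positivity)
      · linarith [hsu]
      · exact hq1nn
      · positivity
    have step2 := master_rat n hn
    have step3 : (n+1)^2*(2*(1/(2*n+1)) + 2*(1/(2*n+1))^3/3 - 3*(1/(2*n+1))^5)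
          *(2*n+3+2*(n+3/2-1/(8*(n+1))))*(1+(-5/(8*(n+1)^2))/2)^2
        ≤ (n+1)^2 * Real.log ((n+1)/n)
          * (n+2 + (n+1) + 2*(Real.sqrt (n+1) * Real.sqrt (n+2)))
          * (1 + ((n+2)*Real.log ((n+2)/(n+1)) - (n+1)*Real.log ((n+1)/n))/2)^2 := by
      have hA : (n+1)^2*(2*(1/(2*n+1)) + 2*(1/(2*n+1))^3/3 - 3*(1/(2*n+1))^5)
            *(2*n+3+2*(n+3/2-1/(8*(n+1))))
          ≤ (n+1)^2 * Real.log ((n+1)/n)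
            * (n+2 + (n+1) + 2*(Real.sqrt (n+1) * Real.sqrt (n+2))) := by
        apply mul_le_mul
        · exact mul_le_mul_of_nonneg_left hL1 (by positivity)
        · linarith [hsl]
        · have h18 : 1/(8*(n+1)) ≤ 1 := by
            rw [div_le_one (by linarith)]; linarith
          linarith
        · positivity
      have hB : (1+(-5/(8*(n+1)^2))/2)^2
          ≤ (1 + ((n+2)*Real.log ((n+2)/(n+1)) - (n+1)*Real.log ((n+1)/n))/2)^2 := by
        apply pow_le_pow_left₀ hdhalf.le (by linarith) 2
      apply mul_le_mul hA hB (by positivity) ?_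
      have : (0:ℝ) ≤ (n+1)^2 * Real.log ((n+1)/n) := by positivity
      have h2 : (0:ℝ) ≤ n+2 + (n+1) + 2*(Real.sqrt (n+1) * Real.sqrt (n+2)) := by
        have := mul_nonneg hq0 hr0; linarith
      exact mul_nonneg this h2
    calc (n+2)^2 * Real.log ((n+2)/(n+1)) * (n+1 + n + 2*(Real.sqrt n * Real.sqrt (n+1)))
        ≤ _ := step1
      _ ≤ _ := step2
      _ ≤ _ := step3
  -- conclude from squares
  have hRnn : 0 ≤ (n+1)*(Real.sqrt (Real.log ((n+1)/n)) * (Real.sqrt (n+2) + Real.sqrt (n+1)))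
        *(1 + ((n+2)*Real.log ((n+2)/(n+1)) - (n+1)*Real.log ((n+1)/n))/2) := by
    apply mul_nonneg (mul_nonneg (by linarith) (mul_nonneg hX0 (by linarith))) hDhalf
  have hLnn : 0 ≤ (n+2)*(Real.sqrt (Real.log ((n+2)/(n+1))) * (Real.sqrt (n+1) + Real.sqrt n)) :=
    mul_nonneg (by linarith) (mul_nonneg hY0 (by linarith))
  calc (n+2)*(Real.sqrt (Real.log ((n+2)/(n+1))) * (Real.sqrt (n+1) + Real.sqrt n))
      = Real.sqrt (((n+2)*(Real.sqrt (Real.log ((n+2)/(n+1)))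
          * (Real.sqrt (n+1) + Real.sqrt n)))^2) := (Real.sqrt_sq hLnn).symm
    _ ≤ Real.sqrt (((n+1)*(Real.sqrt (Real.log ((n+1)/n)) * (Real.sqrt (n+2) + Real.sqrt (n+1)))
          *(1 + ((n+2)*Real.log ((n+2)/(n+1)) - (n+1)*Real.log ((n+1)/n))/2))^2) :=
        Real.sqrt_le_sqrt hsq
    _ = _ := Real.sqrt_sq hRnn

private lemma intIneq (n : ℝ) (hn : 2 ≤ n) :
    (n+2) * ∫ t in Real.sqrt ((n+1) * Real.log ((n+2)/(n+1)))..
        Real.sqrt ((n+2) * Real.log ((n+2)/(n+1))), Real.exp (-t^2/2)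
      ≤ (n+1) * ∫ t in Real.sqrt (n * Real.log ((n+1)/n))..
        Real.sqrt ((n+1) * Real.log ((n+1)/n)), Real.exp (-t^2/2) := by
  have hn0 : (0:ℝ) < n := by linarith
  have hn1 : (0:ℝ) < n+1 := by linarith
  have hn2 : (0:ℝ) < n+2 := by linarith
  have hLpos : 0 < Real.log ((n+1)/n) := Real.log_pos (by rw [lt_div_iff₀ hn0]; linarith)
  have hL'pos : 0 < Real.log ((n+2)/(n+1)) := Real.log_pos (by rw [lt_div_iff₀ hn1]; linarith)
  obtain ⟨hDhalf, hkey⟩ := key_ineq n hn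
  set L : ℝ := Real.log ((n+1)/n) with hLdef
  set L' : ℝ := Real.log ((n+2)/(n+1)) with hL'def
  set p : ℝ := Real.sqrt n with hpdef
  set q : ℝ := Real.sqrt (n+1) with hqdef
  set r : ℝ := Real.sqrt (n+2) with hrdef
  set X : ℝ := Real.sqrt L with hXdef
  set Y : ℝ := Real.sqrt L' with hYdef
  have hp2 : p^2 = n := Real.sq_sqrt hn0.le
  have hq2 : q^2 = n+1 := Real.sq_sqrt hn1.le
  have hr2 : r^2 = n+2 := Real.sq_sqrt hn2.le
  have hX2 : X^2 = L := Real.sq_sqrt hLpos.le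
  have hY2 : Y^2 = L' := Real.sq_sqrt hL'pos.le
  have hXpos : 0 < X := Real.sqrt_pos.2 hLpos
  have hYpos : 0 < Y := Real.sqrt_pos.2 hL'pos
  have hp0 : 0 ≤ p := Real.sqrt_nonneg _
  have hq0 : 0 ≤ q := Real.sqrt_nonneg _
  have hr0 : 0 ≤ r := Real.sqrt_nonneg _
  have hpq : p < q := Real.sqrt_lt_sqrt hn0.le (by linarith)
  have hqr : q < r := Real.sqrt_lt_sqrt hn1.le (by linarith)
  have hLL' : L' ≤ L := by
    apply Real.log_le_log (by positivity)
    rw [div_le_div_iff₀ hn1 hn0]; nlinarith only []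
  have hYX : Y ≤ X := Real.sqrt_le_sqrt hLL'
  have hpr : p * r ≤ n + 1 := by
    have h1 : p * r = Real.sqrt (n * (n+2)) := (Real.sqrt_mul hn0.le _).symm
    have h2 : Real.sqrt (n * (n+2)) ≤ Real.sqrt ((n+1)^2) :=
      Real.sqrt_le_sqrt (by nlinarith only [])
    have h3 : Real.sqrt ((n+1)^2) = n+1 := Real.sqrt_sq hn1.le
    rw [h1]; rw [h3] at h2; exact h2
  -- rewrite integral bounds
  have e1 : Real.sqrt ((n+1) * L') = q * Y := by
    rw [Real.sqrt_mul hn1.le, hqdef, hYdef]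
  have e2 : Real.sqrt ((n+2) * L') = r * Y := by
    rw [Real.sqrt_mul hn2.le, hrdef, hYdef]
  have e3 : Real.sqrt (n * L) = p * X := by
    rw [Real.sqrt_mul hn0.le, hpdef, hXdef]
  have e4 : Real.sqrt ((n+1) * L) = q * X := by
    rw [Real.sqrt_mul hn1.le, hqdef, hXdef]
  clear_value L L' p q r X Y
  rw [e1, e2, e3, e4]
  set α : ℝ := p * X with hαdef
  set β : ℝ := q * X with hβdef
  set α' : ℝ := q * Y with hα'def
  set β' : ℝ := r * Y with hβ'def
  have hαβ : α < β := by
    have := mul_lt_mul_of_pos_right hpq hXpos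
    simpa [hαdef, hβdef] using this
  have hαβ' : α' < β' := by
    have := mul_lt_mul_of_pos_right hqr hYpos
    simpa [hα'def, hβ'def] using this
  set a : ℝ := (β' - α')/(β - α) with hadef
  set b : ℝ := α' - a * α with hbdef
  have hba : 0 < β - α := by linarith
  have hb1 : a * α + b = α' := by rw [hbdef]; ring
  have haprod : a * (β - α) = β' - α' := div_mul_cancel₀ _ hba.ne'
  have hb2 : a * β + b = β' := by
    have : a * β + b = a * α + b + a * (β - α) := by ring
    rw [this, hb1, haprod]; ring
  have ha0 : 0 < a := div_pos (by linarith) hba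
  clear_value α β α' β' a b
  -- a ≤ 1
  have hsum : (r+p)^2 ≤ (2*q)^2 := by nlinarith only [hp2, hr2, hq2, hpr]
  have hrqqp : r - q ≤ q - p := by
    have h2q : r + p ≤ 2*q := by
      have h0 : (0:ℝ) ≤ 2*q := by linarith only [hq0]
      nlinarith only [hsum, h0, hp0, hr0]
    linarith only [h2q]
  have ha1 : a ≤ 1 := by
    rw [hadef, div_le_one hba]
    have h1 : β' - α' = (r - q) * Y := by rw [hβ'def, hα'def]; ring
    have h2 : β - α = (q - p) * X := by rw [hβdef, hαdef]; ring
    rw [h1, h2]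
    exact mul_le_mul hrqqp hYX hYpos.le (by linarith only [hp0, hpq])
  -- cross: (n+2)*a ≤ (n+1)*(1+D/2)
  set D : ℝ := (n+2)*L' - (n+1)*L with hDdef
  clear_value D
  have hc1 : q^2 - p^2 = 1 := by rw [hq2, hp2]; ring
  have hc2 : r^2 - q^2 = 1 := by rw [hr2, hq2]; ring
  have hcross : (n+2) * a ≤ (n+1) * (1 + D/2) := by
    have h := mul_le_mul_of_nonneg_right hkey
      (mul_nonneg (by linarith : (0:ℝ) ≤ r - q) (by linarith : (0:ℝ) ≤ q - p))
    have eL' : (n+2)*(Y*(q+p))*((r-q)*(q-p)) = (n+2)*(β' - α')*(q^2-p^2) := by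
      rw [hβ'def, hα'def]; ring
    have eR' : (n+1)*(X*(r+q))*(1 + D/2)*((r-q)*(q-p))
        = (n+1)*(1+D/2)*(β-α)*(r^2-q^2) := by
      rw [hβdef, hαdef]; ring
    rw [eL', eR', hc1, hc2] at h
    have h' : (n+2)*(β' - α') ≤ (n+1)*(1+D/2)*(β-α) := by linarith only [h]
    rw [hadef, mul_div_assoc' , div_le_iff₀ hba]
    linarith only [h']
  -- pointwise bound
  have hpoint : ∀ t ∈ Set.Icc α β,
      (n+2)*a*Real.exp (-(a*t+b)^2/2) ≤ (n+1)*Real.exp (-t^2/2) := by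
    intro t ht
    have hqt : D ≤ (a*t+b)^2 - t^2 := by
      have hqa : (a*α+b)^2 - α^2 = (n+1)*L' - n*L := by
        rw [hb1, hα'def, hαdef, mul_pow, mul_pow, hq2, hp2, hY2, hX2]
      have hqb : (a*β+b)^2 - β^2 = (n+2)*L' - (n+1)*L := by
        rw [hb2, hβ'def, hβdef, mul_pow, mul_pow, hr2, hq2, hY2, hX2]
      have hDqa : D ≤ (a*α+b)^2 - α^2 := by
        rw [hqa, hDdef]
        linarith only [hLL']
      have hDqb : D = (a*β+b)^2 - β^2 := by rw [hqb, hDdef]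
      have hident : (β-α)*((a*t+b)^2 - t^2)
          = (β-t)*((a*α+b)^2-α^2) + (t-α)*((a*β+b)^2-β^2)
            + (1-a^2)*(β-α)*(t-α)*(β-t) := by ring
      have ha2 : a^2 ≤ 1 := by nlinarith only [ha0, ha1]
      have hnn : 0 ≤ (1-a^2)*(β-α)*(t-α)*(β-t) := by
        apply mul_nonneg (mul_nonneg (mul_nonneg (by linarith) hba.le)
          (by linarith [ht.1])) (by linarith [ht.2])
      have t1 : (β-t)*D ≤ (β-t)*((a*α+b)^2-α^2) :=
        mul_le_mul_of_nonneg_left hDqa (by linarith [ht.2])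
      have t2 : (t-α)*D = (t-α)*((a*β+b)^2-β^2) := by rw [← hDqb]
      have t3 : (β-α)*D ≤ (β-α)*((a*t+b)^2 - t^2) := by linarith only [hident, t1, t2, hnn]
      exact le_of_mul_le_mul_left t3 hba
    have h6 : (n+2)*a ≤ (n+1)*Real.exp (D/2) := by
      refine le_trans hcross ?_
      have h7 := Real.add_one_le_exp (D/2)
      exact mul_le_mul_of_nonneg_left (by linarith only [h7]) (by linarith only [hn1])
    calc (n+2)*a*Real.exp (-(a*t+b)^2/2)
        ≤ (n+1)*Real.exp (D/2)*Real.exp (-(a*t+b)^2/2) :=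
          mul_le_mul_of_nonneg_right h6 (Real.exp_nonneg _)
      _ = (n+1)*Real.exp (D/2 + -(a*t+b)^2/2) := by rw [mul_assoc, ← Real.exp_add]
      _ ≤ (n+1)*Real.exp (-t^2/2) := by
          apply mul_le_mul_of_nonneg_left (Real.exp_le_exp.2 (by linarith only [hqt])) (by linarith only [hn1])
  -- integrals
  have hf1 : IntervalIntegrable (fun t => (n+2)*a*Real.exp (-(a*t+b)^2/2)) volume α β := by
    apply Continuous.intervalIntegrable
    exact continuous_const.mul (Real.continuous_exp.comp
      ((((continuous_const.mul continuous_id').add continuous_const).pow 2).neg.div_const 2))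
  have hf2 : IntervalIntegrable (fun t => (n+1)*Real.exp (-t^2/2)) volume α β := by
    apply Continuous.intervalIntegrable
    exact continuous_const.mul (Real.continuous_exp.comp
      (((continuous_id'.pow 2).neg.div_const 2)))
  have hint := intervalIntegral.integral_mono_on hαβ.le hf1 hf2 hpoint
  rw [intervalIntegral.integral_const_mul, intervalIntegral.integral_const_mul] at hint
  have htrans : a * ∫ t in α..β, Real.exp (-(a*t+b)^2/2)
      = ∫ t in α'..β', Real.exp (-t^2/2) := by
    have := intervalIntegral.smul_integral_comp_mul_add
      (a := α) (b := β) (f := fun t => Real.exp (-t^2/2)) a b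
    rw [hb1, hb2] at this
    simpa [smul_eq_mul] using this
  calc (n+2) * ∫ t in α'..β', Real.exp (-t^2/2)
      = (n+2)*a * ∫ t in α..β, Real.exp (-(a*t+b)^2/2) := by rw [mul_assoc, htrans]
    _ ≤ (n+1) * ∫ t in α..β, Real.exp (-t^2/2) := hint

/-- `I(j) = (1/√(2π)) ∫_{√(j ln((j+1)/j))}^{√((j+1) ln((j+1)/j))} e^{-t²/2} dt`. -/
noncomputable def gaussInt (j : ℕ) : ℝ :=
  (Real.sqrt (2 * Real.pi))⁻¹
    * ∫ t in Real.sqrt ((j : ℝ) * Real.log (((j : ℝ) + 1) / j))..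
        Real.sqrt (((j : ℝ) + 1) * Real.log (((j : ℝ) + 1) / j)),
        Real.exp (-t ^ 2 / 2)

private lemma part1 (j : ℕ) (hj : 2 ≤ j) :
    ((j:ℝ)+2) * gaussInt (j+1) ≤ ((j:ℝ)+1) * gaussInt j := by
  have hn : (2:ℝ) ≤ (j:ℝ) := by exact_mod_cast hj
  have h := intIneq (j:ℝ) hn
  have hc : (0:ℝ) ≤ (Real.sqrt (2*Real.pi))⁻¹ := by positivity
  unfold gaussInt
  push_cast
  rw [show ((j:ℝ)+1+1) = (j:ℝ)+2 from by ring]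
  rw [mul_left_comm ((j:ℝ)+2), mul_left_comm ((j:ℝ)+1)]
  exact mul_le_mul_of_nonneg_left h hc

private lemma part2 : ∀ j : ℕ, 2 ≤ j → ((j:ℝ)+1) * gaussInt j ≤ 3 * gaussInt 2 := by
  intro j hj
  induction j, hj using Nat.le_induction with
  | base => norm_num
  | succ k hk ih =>
      have h1 := part1 k hk
      push_cast
      calc ((k:ℝ)+1+1) * gaussInt (k+1) = ((k:ℝ)+2) * gaussInt (k+1) := by ring_nf
        _ ≤ ((k:ℝ)+1) * gaussInt k := h1
        _ ≤ 3 * gaussInt 2 := ih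

theorem stmt6 :
    (∀ j : ℕ, 2 ≤ j → ((j : ℝ) + 2) * gaussInt (j + 1) ≤ ((j : ℝ) + 1) * gaussInt j)
      ∧ (∀ j : ℕ, 2 ≤ j → ((j : ℝ) + 1) * gaussInt j ≤ 3 * gaussInt 2)
      ∧ 3 * gaussInt 2
          = 3 / Real.sqrt (2 * Real.pi)
            * ∫ t in Real.sqrt (2 * Real.log (3 / 2))..Real.sqrt (3 * Real.log (3 / 2)),
                Real.exp (-t ^ 2 / 2) := by
  refine ⟨part1, part2, ?_⟩
  unfold gaussInt
  norm_num
  rw [div_eq_mul_inv]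
  ring
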